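/- arXiv:1104.0855 — 3 statements merged into one kernel-verified Lean document; each statement's English description precedes it below -/
import Mathlib

section
/- For any topological space X and x ∈ X, if X is lasso homotopically Hausdorff at x (⋂_U π(U, x) = 1, the intersection taken over all open covers U of X), then X is homotopically Hausdorff at x (⋂_V im(π₁(V,x) → π₁(X,x)) = 1, the intersection taken over all open neighborhoods V of x). -/
open Set

variable {X : Type*} [TopologicalSpace X]

/-- The star of a point `x` with respect to a cover: the union of all members containing `x`. -/
def ptStar (𝒞 : Set (Set X)) (x : X) : Set X := ⋃₀ {C ∈ 𝒞 | x ∈ C}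

/-- The star `St(W, 𝒞)` of a set `W`: the union of all members of `𝒞` meeting `W`. -/
def setStar (𝒞 : Set (Set X)) (W : Set X) : Set X := ⋃₀ {C ∈ 𝒞 | (C ∩ W).Nonempty}

/-- The cover `St(𝒞) = {St(C, 𝒞) : C ∈ 𝒞}`. -/
def starCover (𝒞 : Set (Set X)) : Set (Set X) := setStar 𝒞 '' 𝒞

/-- `𝒱` refines `𝒰`: every member of `𝒱` is contained in some member of `𝒰`. -/
def Refines (𝒱 𝒰 : Set (Set X)) : Prop := ∀ V ∈ 𝒱, ∃ U ∈ 𝒰, V ⊆ U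

/-- An open cover of `X`. -/
def IsOpenCover (𝒰 : Set (Set X)) : Prop := (∀ U ∈ 𝒰, IsOpen U) ∧ ⋃₀ 𝒰 = univ

/-- `𝒱` star refines `𝒰`: the cover of point stars of `𝒱` refines `𝒰`. -/
def StarRefines (𝒱 𝒰 : Set (Set X)) : Prop := ∀ x : X, ∃ U ∈ 𝒰, ptStar 𝒱 x ⊆ U

/-- The element of the fundamental group determined by a loop. -/
noncomputable def loopClass {x : X} (γ : Path x x) : FundamentalGroup X x :=
  FundamentalGroup.fromPath (X := TopCat.of X) ⟦γ⟧

/-- The subgroup `π(𝒰, x)` of `π₁(X, x)` generated by classes `[α·γ·α⁻¹]` where `α` is a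
path starting at `x` and `γ` is a loop contained in some member of `𝒰`. -/
noncomputable def piCover (𝒰 : Set (Set X)) (x : X) : Subgroup (FundamentalGroup X x) :=
  Subgroup.closure {g | ∃ (y : X) (α : Path x y) (γ : Path y y) (U : Set X),
    U ∈ 𝒰 ∧ Set.range γ ⊆ U ∧ g = loopClass ((α.trans γ).trans α.symm)}

open CategoryTheory in
/-- The image of `π₁(U, x)` in `π₁(X, x)` induced by the inclusion `U → X`. -/
noncomputable def imageSubgroup (U : Set X) (x : X) (hx : x ∈ U) :
    Subgroup (FundamentalGroup X x) :=
  MonoidHom.range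
    (show FundamentalGroup U ⟨x, hx⟩ →* FundamentalGroup X x from
      Functor.mapEnd (FundamentalGroupoid.mk (⟨x, hx⟩ : U))
        (FundamentalGroupoid.fundamentalGroupoidFunctor.map
          (X := TopCat.of U) (Y := TopCat.of X)
          (TopCat.ofHom ⟨Subtype.val, continuous_subtype_val⟩)))

attribute [local instance] Path.Homotopic.setoid
open CategoryTheory in
lemma loopClass_refl_conj {x : X} (γ : Path x x) :
    loopClass (((Path.refl x).trans γ).trans (Path.refl x).symm) = loopClass γ := by
  unfold loopClass
  congr 1
  rw [Path.refl_symm]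
  show (⟦((Path.refl x).trans γ).trans (Path.refl x)⟧ :
    FundamentalGroupoid.mk (X := TopCat.of X) x ⟶ FundamentalGroupoid.mk x) = ⟦γ⟧
  exact Quotient.sound ⟨(Path.Homotopy.transRefl _).trans (Path.Homotopy.reflTrans γ)⟩

open CategoryTheory in
lemma image_le_piCover {𝒰 : Set (Set X)} {x : X} {U : Set X} (hU : U ∈ 𝒰) (hx : x ∈ U) :
    imageSubgroup U x hx ≤ piCover 𝒰 x := by
  rintro g ⟨p, rfl⟩
  obtain ⟨q, hq⟩ := Quotient.exists_rep p
  apply Subgroup.subset_closure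
  refine ⟨x, Path.refl x, q.map continuous_subtype_val, U, hU, ?_, ?_⟩
  · rintro _ ⟨t, rfl⟩
    exact (q t).2
  · rw [loopClass_refl_conj]
    show (FundamentalGroupoid.fundamentalGroupoidFunctor.map
      (X := TopCat.of U) (Y := TopCat.of X)
      (TopCat.ofHom ⟨Subtype.val, continuous_subtype_val⟩)).map p = _
    rw [← hq]
    rfl

/-- If `X` is lasso homotopically Hausdorff at `x` (the intersection of the `π(𝒰, x)` over
all open covers `𝒰` is trivial), then `X` is homotopically Hausdorff at `x` (the intersection
of the images of `π₁(V, x)` over all open neighborhoods `V` of `x` is trivial). -/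
theorem homotopicallyHausdorffAt_of_lassoAt (x : X)
    (h : (⨅ (𝒰 : Set (Set X)) (_ : IsOpenCover 𝒰), piCover 𝒰 x) = ⊥) :
    (⨅ (V : Set X) (_ : IsOpen V) (hx : x ∈ V), imageSubgroup V x hx) = ⊥ := by
  rw [← le_bot_iff, ← h]
  refine le_iInf fun 𝒰 => le_iInf fun h𝒰 => ?_
  obtain ⟨U, hU, hxU⟩ : ∃ U ∈ 𝒰, x ∈ U := by
    have : x ∈ ⋃₀ 𝒰 := h𝒰.2 ▸ mem_univ x
    simpa using this
  calc (⨅ (V : Set X) (_ : IsOpen V) (hx : x ∈ V), imageSubgroup V x hx)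
      ≤ imageSubgroup U x hxU :=
        iInf_le_of_le U (iInf_le_of_le (h𝒰.1 U hU) (iInf_le _ hxU))
    _ ≤ piCover 𝒰 x := image_le_piCover hU hxU
end

section
/- Let X be a metric space, α: [0,1] → X a path, and U an open cover of X. Then there exists δ > 0 such that every subinterval of [0,1] of length at most δ is mapped by α into some member of U; moreover, for any two such choices 0 < δ₁ < δ₂, the two resulting U-chains α(0), α(δ₁), α(2δ₁), …, α(1) and α(0), α(δ₂), α(2δ₂), …, α(1) are U-homotopic. -/
open Set

variable {X : Type*} [TopologicalSpace X]

/-- Two points lie in a common member of `𝒰`. -/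
def ChainCond (𝒰 : Set (Set X)) (a b : X) : Prop := ∃ U ∈ 𝒰, a ∈ U ∧ b ∈ U

/-- A `𝒰`-chain: a nonempty finite list of points of `X` with consecutive points lying in
a common member of `𝒰`. -/
def IsUChain (𝒰 : Set (Set X)) (l : List X) : Prop := l ≠ [] ∧ l.Chain' (ChainCond 𝒰)

/-- Elementary moves on `𝒰`-chains: inserting or deleting a vertex within a simplex of the
Rips complex `R(X, 𝒰)`, and inserting or deleting a repeated vertex. -/
inductive ChainStep (𝒰 : Set (Set X)) : List X → List X → Prop
  | insert (pre post : List X) (a y b : X) (U : Set X) (hU : U ∈ 𝒰)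
      (ha : a ∈ U) (hy : y ∈ U) (hb : b ∈ U) :
      ChainStep 𝒰 (pre ++ a :: b :: post) (pre ++ a :: y :: b :: post)
  | delete (pre post : List X) (a y b : X) (U : Set X) (hU : U ∈ 𝒰)
      (ha : a ∈ U) (hy : y ∈ U) (hb : b ∈ U) :
      ChainStep 𝒰 (pre ++ a :: y :: b :: post) (pre ++ a :: b :: post)
  | dup (pre post : List X) (a : X) :
      ChainStep 𝒰 (pre ++ a :: post) (pre ++ a :: a :: post)
  | dedup (pre post : List X) (a : X) :
      ChainStep 𝒰 (pre ++ a :: a :: post) (pre ++ a :: post)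

/-- Two `𝒰`-chains are `𝒰`-homotopic when they are related by a finite sequence of
elementary moves. -/
def ChainHomotopic (𝒰 : Set (Set X)) : List X → List X → Prop :=
  Relation.ReflTransGen (ChainStep 𝒰)

/-- `c` is a `𝒰`-chain sampling of the path `β`: it is obtained by evaluating `β` along a
partition `0 = t₀ ≤ ⋯ ≤ tₙ = 1` fine enough that each subinterval maps into a member of `𝒰`. -/
def Samples (𝒰 : Set (Set X)) {x y : X} (β : Path x y) (c : List X) : Prop :=
  ∃ (n : ℕ) (t : Fin (n + 1) → unitInterval), Monotone t ∧ t 0 = 0 ∧ t (Fin.last n) = 1 ∧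
    (∀ i : Fin n, ∃ U ∈ 𝒰, β '' Set.Icc (t i.castSucc) (t i.succ) ⊆ U) ∧
    c = List.ofFn fun i => β (t i)

variable {M : Type*} [MetricSpace M]

/-- The uniform `δ`-sample chain `α(0), α(δ), α(2δ), …, α(1)` of a path. -/
noncomputable def uniformSample {x y : M} (α : Path x y) (δ : ℝ) : List M :=
  List.ofFn fun i : Fin (⌈1 / δ⌉₊ + 1) =>
    α (Set.projIcc (0 : ℝ) 1 zero_le_one ((i : ℕ) * δ))

/-- `δ` is a fine mesh for `α` with respect to `𝒰`: every subinterval of `[0,1]` of length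
at most `δ` is mapped by `α` into some member of `𝒰`. -/
def FineMesh (𝒰 : Set (Set M)) {x y : M} (α : Path x y) (δ : ℝ) : Prop :=
  ∀ s t : unitInterval, (t : ℝ) - (s : ℝ) ≤ δ → ∃ U ∈ 𝒰, α '' Set.Icc s t ⊆ U

/-! Both uniform samples evaluate the path at sorted times `0 = t₀ ≤ t₁ ≤ ⋯ ≤ tₙ = 1` with
gaps at most the mesh. Merge the two lists of times into one sorted common refinement. Passing
from either list to the refinement adds one time `c` at a time, between consecutive times
`a ≤ c ≤ d`; as `d` is no later than the next time of the coarse list, `d - a` is within the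
mesh, so the images of `a`, `c`, `d` lie in one member of `𝒰` and the addition is an
elementary insertion. Hence both samples are `𝒰`-homotopic to the refined one. -/

namespace List

variable {ι : Type*} [LinearOrder ι] {a b : ι}

theorem pairwise_le_cons_append_singleton_iff {l : List ι} :
    (a :: (l ++ [b])).Pairwise (· ≤ ·) ↔ l.Pairwise (· ≤ ·) ∧ a ≤ b ∧ ∀ z ∈ l, a ≤ z ∧ z ≤ b := by
  simp only [pairwise_cons, pairwise_append, mem_append, mem_singleton, not_mem_nil, forall_eq]
  grind

theorem exists_sorted_common_supersequence {l₁ l₂ : List ι}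
    (h₁ : (a :: (l₁ ++ [b])).Pairwise (· ≤ ·)) (h₂ : (a :: (l₂ ++ [b])).Pairwise (· ≤ ·)) :
    ∃ l, (a :: (l ++ [b])).Pairwise (· ≤ ·) ∧ l₁.Sublist l ∧ l₂.Sublist l := by
  simp only [pairwise_le_cons_append_singleton_iff] at h₁ h₂ ⊢
  set l := (l₁ ++ l₂).mergeSort (· ≤ ·)
  have hl : l.Pairwise (· ≤ ·) := pairwise_mergeSort' _ _
  have hperm : l.Perm (l₁ ++ l₂) := mergeSort_perm _ _
  refine ⟨l, ⟨hl, h₁.2.1, fun z hz => ?_⟩, ?_, ?_⟩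
  · rcases mem_append.mp (hperm.subset hz) with hz | hz
    exacts [h₁.2.2 z hz, h₂.2.2 z hz]
  · exact sublist_of_subperm_of_pairwise
      ((sublist_append_left _ _).subperm.trans hperm.symm.subperm) h₁.1 hl
  · exact sublist_of_subperm_of_pairwise
      ((sublist_append_right _ _).subperm.trans hperm.symm.subperm) h₂.1 hl

end List

section ChainHomotopic

variable {Y : Type*} {𝒰 : Set (Set Y)} {l l' : List Y}

theorem ChainStep.symm (h : ChainStep 𝒰 l l') : ChainStep 𝒰 l' l := by
  cases h with
  | insert pre post a y b U hU ha hy hb => exact .delete pre post a y b U hU ha hy hb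
  | delete pre post a y b U hU ha hy hb => exact .insert pre post a y b U hU ha hy hb
  | dup pre post a => exact .dedup pre post a
  | dedup pre post a => exact .dup pre post a

theorem ChainStep.cons (z : Y) (h : ChainStep 𝒰 l l') : ChainStep 𝒰 (z :: l) (z :: l') := by
  cases h with
  | insert pre post a y b U hU ha hy hb => exact .insert (z :: pre) post a y b U hU ha hy hb
  | delete pre post a y b U hU ha hy hb => exact .delete (z :: pre) post a y b U hU ha hy hb
  | dup pre post a => exact .dup (z :: pre) post a
  | dedup pre post a => exact .dedup (z :: pre) post a

theorem ChainHomotopic.symm (h : ChainHomotopic 𝒰 l l') : ChainHomotopic 𝒰 l' l :=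
  Relation.ReflTransGen.mono (fun _ _ => ChainStep.symm) _ _ (Relation.ReflTransGen.swap _ _ h)

theorem ChainHomotopic.cons (z : Y) (h : ChainHomotopic 𝒰 l l') :
    ChainHomotopic 𝒰 (z :: l) (z :: l') :=
  h.lift (z :: ·) fun _ _ => ChainStep.cons z

theorem chainHomotopic_map_of_sublist {g : ℝ → Y} {δ : ℝ}
    (hg : ∀ a b, a ≤ b → b - a ≤ δ → ∃ U ∈ 𝒰, g '' Icc a b ⊆ U)
    {l₁ l₂ : List ℝ} (h : l₁.Sublist l₂) {a b : ℝ}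
    (hsorted : (a :: (l₂ ++ [b])).Pairwise (· ≤ ·))
    (hgap : (a :: (l₁ ++ [b])).IsChain fun s t => t - s ≤ δ) :
    ChainHomotopic 𝒰 ((a :: (l₁ ++ [b])).map g) ((a :: (l₂ ++ [b])).map g) := by
  induction h generalizing a with
  | slnil => exact .refl
  | @cons l₁ l₂ c h ih =>
    refine (ih (hsorted.sublist (.cons_cons a (.cons c (.refl _)))) hgap).tail ?_
    obtain ⟨d, r, hdr⟩ := List.exists_cons_of_ne_nil (show l₂ ++ [b] ≠ [] by simp)
    obtain ⟨e, s, hes⟩ := List.exists_cons_of_ne_nil (show l₁ ++ [b] ≠ [] by simp)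
    rw [List.cons_append, hdr] at hsorted ⊢
    rw [hes] at hgap
    have hac : a ≤ c := List.rel_of_pairwise_cons hsorted (by simp)
    have hcd : c ≤ d := List.rel_of_pairwise_cons hsorted.of_cons (by simp)
    have hde : d ≤ e := by
      have he : e ∈ d :: r := hdr ▸ (h.append_right [b]).subset (hes ▸ List.mem_cons_self)
      rcases List.mem_cons.mp he with rfl | he
      exacts [le_rfl, List.rel_of_pairwise_cons hsorted.of_cons.of_cons he]
    have hea : e - a ≤ δ := (List.isChain_cons_cons.mp hgap).1
    obtain ⟨U, hU, hgU⟩ := hg a d (hac.trans hcd) (by linarith)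
    have hmem : ∀ t ∈ Icc a d, g t ∈ U := fun t ht => hgU (mem_image_of_mem g ht)
    simpa using ChainStep.insert [] (r.map g) (g a) (g c) (g d) U hU
      (hmem a ⟨le_rfl, hac.trans hcd⟩) (hmem c ⟨hac, hcd⟩) (hmem d ⟨hac.trans hcd, le_rfl⟩)
  | @cons_cons l₁ l₂ c h ih =>
    exact ChainHomotopic.cons (g a) (ih hsorted.of_cons hgap.tail)

end ChainHomotopic

section FineMesh

variable {𝒰 : Set (Set M)} {x y : M}

theorem exists_fineMesh (h𝒰 : IsOpenCover 𝒰) (α : Path x y) : ∃ δ > 0, FineMesh 𝒰 α δ := by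
  have hcover : (univ : Set unitInterval) ⊆ ⋃ U : 𝒰, α ⁻¹' U := fun z _ => by
    obtain ⟨U, hU, hz⟩ : α z ∈ ⋃₀ 𝒰 := h𝒰.2 ▸ mem_univ _
    exact mem_iUnion.2 ⟨⟨U, hU⟩, hz⟩
  obtain ⟨δ, hδ, hball⟩ := lebesgue_number_lemma_of_metric isCompact_univ
    (fun U : 𝒰 => (h𝒰.1 U U.2).preimage α.continuous) hcover
  refine ⟨δ / 2, half_pos hδ, fun s t hst => ?_⟩
  obtain ⟨U, hU⟩ := hball s trivial
  refine ⟨U, U.2, image_subset_iff.2 fun z ⟨hsz, hzt⟩ => hU ?_⟩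
  have hsz : (s : ℝ) ≤ z := hsz
  have hzt : (z : ℝ) ≤ t := hzt
  rw [Metric.mem_ball, Subtype.dist_eq, Real.dist_eq, abs_of_nonneg (sub_nonneg.2 hsz)]
  linarith

theorem FineMesh.exists_image_extend_subset {α : Path x y} {δ : ℝ} (h : FineMesh 𝒰 α δ)
    {a b : ℝ} (hab : a ≤ b) (hδ : b - a ≤ δ) : ∃ U ∈ 𝒰, α.extend '' Icc a b ⊆ U := by
  have hproj :
      (projIcc (0 : ℝ) 1 zero_le_one b : ℝ) - projIcc (0 : ℝ) 1 zero_le_one a ≤ b - a := by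
    simp only [projIcc]
    grind
  obtain ⟨U, hU, hsub⟩ := h _ _ (hproj.trans hδ)
  refine ⟨U, hU, ?_⟩
  rintro _ ⟨t, ⟨hat, htb⟩, rfl⟩
  exact hsub ⟨_, ⟨monotone_projIcc _ hat, monotone_projIcc _ htb⟩, rfl⟩

end FineMesh

-- Clamping at `1` makes the last time exactly `1`, whatever `δ`.
noncomputable def uniformTimes (δ : ℝ) : List ℝ :=
  List.ofFn fun i : Fin (⌈1 / δ⌉₊ + 1) => min (i * δ) 1

theorem uniformTimes_pairwise_le {δ : ℝ} (hδ : 0 ≤ δ) : (uniformTimes δ).Pairwise (· ≤ ·) :=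
  List.pairwise_ofFn.2 fun _ _ hij =>
    min_le_min_right 1 (mul_le_mul_of_nonneg_right (by exact_mod_cast hij.le) hδ)

theorem uniformTimes_isChain {δ : ℝ} (hδ : 0 ≤ δ) :
    (uniformTimes δ).IsChain fun s t => t - s ≤ δ :=
  List.isChain_ofFn.2 fun i _ => by
    push_cast
    grind

theorem uniformTimes_eq_cons_append {δ : ℝ} (hδ : 0 < δ) :
    ∃ I, uniformTimes δ = 0 :: (I ++ [1]) := by
  obtain ⟨n, hn⟩ := Nat.exists_eq_add_one_of_ne_zero (Nat.ceil_pos.2 (one_div_pos.2 hδ)).ne'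
  have hlast : 1 ≤ ((n : ℝ) + 1) * δ := by
    rw [← Nat.cast_add_one, ← hn, ← div_le_iff₀ hδ]
    exact Nat.le_ceil _
  refine ⟨List.ofFn fun i : Fin n => min ((i + 1 : ℕ) * δ) 1, ?_⟩
  rw [uniformTimes, hn, List.ofFn_succ, List.ofFn_succ']
  simp [hlast]

theorem uniformSample_eq_map_extend {x y : M} (α : Path x y) (δ : ℝ) :
    uniformSample α δ = (uniformTimes δ).map α.extend := by
  rw [uniformSample, uniformTimes, List.map_ofFn]
  congr 1
  funext i
  rcases le_total ((i : ℕ) * δ) 1 with h | h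
  · rw [Function.comp_apply, min_eq_left h]
    rfl
  · rw [Function.comp_apply, min_eq_right h, α.extend_one]
    exact α.extend_of_one_le h

/-- For a path `α` in a metric space and an open cover `𝒰` there is a `δ > 0` such that every
subinterval of length at most `δ` maps into a member of `𝒰` (Lebesgue number lemma), and any
two uniform sample chains for such mesh sizes are `𝒰`-homotopic. -/
theorem exists_fine_mesh_and_uniformSamples_chainHomotopic
    (𝒰 : Set (Set M)) (h𝒰 : IsOpenCover 𝒰) {x y : M} (α : Path x y) :
    (∃ δ > 0, FineMesh 𝒰 α δ) ∧
      ∀ δ₁ δ₂ : ℝ, 0 < δ₁ → δ₁ < δ₂ → FineMesh 𝒰 α δ₁ → FineMesh 𝒰 α δ₂ →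
        ChainHomotopic 𝒰 (uniformSample α δ₁) (uniformSample α δ₂) := by
  refine ⟨exists_fineMesh h𝒰 α, fun δ₁ δ₂ hδ₁ hδ₁₂ hf₁ hf₂ => ?_⟩
  have hδ₂ : 0 < δ₂ := hδ₁.trans hδ₁₂
  obtain ⟨I₁, hI₁⟩ := uniformTimes_eq_cons_append hδ₁
  obtain ⟨I₂, hI₂⟩ := uniformTimes_eq_cons_append hδ₂
  obtain ⟨I, hI, hsub₁, hsub₂⟩ := List.exists_sorted_common_supersequence
    (hI₁ ▸ uniformTimes_pairwise_le hδ₁.le) (hI₂ ▸ uniformTimes_pairwise_le hδ₂.le)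
  have h₁ := chainHomotopic_map_of_sublist (fun _ _ => hf₁.exists_image_extend_subset) hsub₁ hI
    (hI₁ ▸ uniformTimes_isChain hδ₁.le)
  have h₂ := chainHomotopic_map_of_sublist (fun _ _ => hf₂.exists_image_extend_subset) hsub₂ hI
    (hI₂ ▸ uniformTimes_isChain hδ₂.le)
  rw [uniformSample_eq_map_extend, uniformSample_eq_map_extend, hI₁, hI₂]
  exact h₁.trans h₂.symm
end

section
/- Let X be a Hausdorff topological space with basepoint x₀ and let X̃ be the set of fixed-endpoint homotopy classes of paths starting at x₀ with the whisker topology. Then X̃ is Hausdorff if and only if X is homotopically Hausdorff (for every x ∈ X, the intersection over neighborhoods U of x of the images of π₁(U, x) in π₁(X, x) is trivial), assuming X is path connected. -/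
open Set

variable {X : Type*} [TopologicalSpace X]

/-- The set `X̃` of fixed endpoint homotopy classes of paths in `X` starting at `x₀`. -/
def PathSpace (X : Type*) [TopologicalSpace X] (x₀ : X) :=
  Σ y : X, Path.Homotopic.Quotient x₀ y

/-- The basic set `B([α], U)`: all classes `[β]` such that `α⁻¹·β` is fixed endpoint homotopic
to a path in `U`; equivalently `[β] = [α]·[γ]` for some path `γ` contained in `U`. -/
def whiskerBall {x₀ : X} (p : PathSpace X x₀) (U : Set X) : Set (PathSpace X x₀) :=
  {q | ∃ γ : Path p.1 q.1, Set.range γ ⊆ U ∧ q.2 = Path.Homotopic.Quotient.trans p.2 (Quotient.mk (Path.Homotopic.setoid _ _) γ)}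

/-- The whisker topology on `X̃`, generated by the basic sets `B([α], U)`. -/
def whiskerTopology (x₀ : X) : TopologicalSpace (PathSpace X x₀) :=
  TopologicalSpace.generateFrom
    {S | ∃ (p : PathSpace X x₀) (U : Set X), IsOpen U ∧ p.1 ∈ U ∧ S = whiskerBall p U}


/-!
For a fixed open `U`, "`q ∈ B(p, U)`" is an equivalence relation on the classes ending in `U`,
so two whisker balls over the same `U` are equal or disjoint. Classes `[α]` and `[α]·g` with the
same endpoint `x` therefore have disjoint balls over `U` exactly when the loop class `g` does not
come from `π₁(U, x)`. Hence a loop class lying in the image of every `π₁(U, x)` yields two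
classes that cannot be separated, and otherwise every pair with a common endpoint is separated;
pairs with different endpoints are separated by pulling back disjoint neighbourhoods in `X`
along the continuous endpoint map.
-/

namespace Path.Homotopic.Quotient

theorem trans_right_injective {x₀ x₁ x₂ : X} (c : Path.Homotopic.Quotient x₀ x₁) :
    Function.Injective (c.trans : Path.Homotopic.Quotient x₁ x₂ → _) := fun g g' h => by
  simpa [← trans_assoc] using congrArg c.symm.trans h

end Path.Homotopic.Quotient

theorem mem_imageSubgroup_iff {U : Set X} {x : X} (hx : x ∈ U) (g : FundamentalGroup X x) :
    g ∈ imageSubgroup U x hx ↔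
      ∃ ℓ : Path x x, range ℓ ⊆ U ∧ g.toPath = .mk ℓ := by
  constructor
  · rintro ⟨h, rfl⟩
    induction h using Path.Homotopic.Quotient.ind with | mk ℓ =>
    exact ⟨ℓ.map continuous_subtype_val, by rintro - ⟨t, rfl⟩; exact (ℓ t).2, rfl⟩
  · rintro ⟨ℓ, hℓU, hg⟩
    let ℓU : Path (⟨x, hx⟩ : U) ⟨x, hx⟩ :=
      { toFun t := ⟨ℓ t, hℓU (mem_range_self t)⟩
        source' := Subtype.ext ℓ.source
        target' := Subtype.ext ℓ.target }
    exact ⟨Path.Homotopic.Quotient.mk ℓU, hg.symm⟩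

variable (X) in
def HomotopicallyHausdorff : Prop :=
  ∀ x : X, (⨅ (U : Set X) (_ : IsOpen U) (hx : x ∈ U), imageSubgroup U x hx) = ⊥

instance (x₀ : X) : TopologicalSpace (PathSpace X x₀) := whiskerTopology x₀

variable {x₀ : X} {p q : PathSpace X x₀} {U V : Set X}

theorem mem_whiskerBall_self (hp : p.1 ∈ U) : p ∈ whiskerBall p U :=
  ⟨Path.refl p.1, by simpa using hp, by simp⟩

theorem fst_mem_of_mem_whiskerBall (h : q ∈ whiskerBall p U) : q.1 ∈ U := by
  obtain ⟨γ, hγU, -⟩ := h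
  simpa using hγU ⟨1, γ.target⟩

theorem whiskerBall_mono (h : U ⊆ V) : whiskerBall p U ⊆ whiskerBall p V :=
  fun _ ⟨γ, hγU, hq⟩ => ⟨γ, hγU.trans h, hq⟩

theorem mem_whiskerBall_comm (h : q ∈ whiskerBall p U) : p ∈ whiskerBall q U := by
  obtain ⟨γ, hγU, hq⟩ := h
  refine ⟨γ.symm, by rwa [Path.symm_range], ?_⟩
  simp [hq, Path.Homotopic.Quotient.trans_assoc]

theorem whiskerBall_subset_of_mem (h : q ∈ whiskerBall p U) :
    whiskerBall q U ⊆ whiskerBall p U := by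
  obtain ⟨γ, hγU, hq⟩ := h
  rintro r ⟨δ, hδU, hr⟩
  refine ⟨γ.trans δ, by simpa [Path.trans_range] using ⟨hγU, hδU⟩, ?_⟩
  simp [hr, hq, Path.Homotopic.Quotient.trans_assoc]

theorem disjoint_whiskerBall_iff :
    Disjoint (whiskerBall p U) (whiskerBall q U) ↔ q ∉ whiskerBall p U := by
  refine ⟨fun h hq => h.ne_of_mem hq (mem_whiskerBall_self (fst_mem_of_mem_whiskerBall hq)) rfl,
    fun h => disjoint_left.2 fun r hrp hrq => h ?_⟩
  exact whiskerBall_subset_of_mem hrp (mem_whiskerBall_comm hrq)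

theorem isTopologicalBasis_whiskerBall (x₀ : X) :
    TopologicalSpace.IsTopologicalBasis
      {S : Set (PathSpace X x₀) | ∃ p U, IsOpen U ∧ p.1 ∈ U ∧ S = whiskerBall p U} := by
  refine ⟨?_, ?_, rfl⟩
  · rintro _ ⟨p, U, hU, -, rfl⟩ _ ⟨q, V, hV, -, rfl⟩ r ⟨hrp, hrq⟩
    have hrUV : r.1 ∈ U ∩ V := ⟨fst_mem_of_mem_whiskerBall hrp, fst_mem_of_mem_whiskerBall hrq⟩
    refine ⟨whiskerBall r (U ∩ V), ⟨r, U ∩ V, hU.inter hV, hrUV, rfl⟩,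
      mem_whiskerBall_self hrUV, fun s hs => ⟨?_, ?_⟩⟩
    · exact whiskerBall_subset_of_mem hrp (whiskerBall_mono inter_subset_left hs)
    · exact whiskerBall_subset_of_mem hrq (whiskerBall_mono inter_subset_right hs)
  · exact sUnion_eq_univ_iff.2 fun p =>
      ⟨_, ⟨p, univ, isOpen_univ, mem_univ _, rfl⟩, mem_whiskerBall_self (mem_univ _)⟩

theorem isOpen_whiskerBall (hU : IsOpen U) (hp : p.1 ∈ U) : IsOpen (whiskerBall p U) :=
  (isTopologicalBasis_whiskerBall x₀).isOpen ⟨p, U, hU, hp, rfl⟩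

theorem exists_whiskerBall_subset {s : Set (PathSpace X x₀)} (hs : IsOpen s) (hp : p ∈ s) :
    ∃ U, IsOpen U ∧ p.1 ∈ U ∧ whiskerBall p U ⊆ s := by
  obtain ⟨_, ⟨p', U, hU, -, rfl⟩, hpU, hUs⟩ :=
    (isTopologicalBasis_whiskerBall x₀).exists_subset_of_mem_open hp hs
  exact ⟨U, hU, fst_mem_of_mem_whiskerBall hpU, (whiskerBall_subset_of_mem hpU).trans hUs⟩

theorem continuous_fst_pathSpace : Continuous (fun p : PathSpace X x₀ => p.1) :=
  continuous_def.2 fun U hU => isOpen_iff_forall_mem_open.2 fun p hp =>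
    ⟨whiskerBall p U, fun _ => fst_mem_of_mem_whiskerBall, isOpen_whiskerBall hU hp,
      mem_whiskerBall_self hp⟩

theorem mk_trans_mem_whiskerBall_iff {y : X} (c : Path.Homotopic.Quotient x₀ y)
    (g : FundamentalGroup X y) (hy : y ∈ U) :
    (⟨y, c.trans g.toPath⟩ : PathSpace X x₀) ∈ whiskerBall ⟨y, c⟩ U ↔
      g ∈ imageSubgroup U y hy := by
  rw [mem_imageSubgroup_iff]
  exact exists_congr fun ℓ => and_congr_right' c.trans_right_injective.eq_iff

theorem eq_one_of_forall_mem_imageSubgroup [T2Space (PathSpace X x₀)] {x : X}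
    (c : Path.Homotopic.Quotient x₀ x) {g : FundamentalGroup X x}
    (hg : ∀ U, IsOpen U → ∀ hx : x ∈ U, g ∈ imageSubgroup U x hx) : g = 1 := by
  by_contra hg1
  have hne : (⟨x, c⟩ : PathSpace X x₀) ≠ ⟨x, c.trans g.toPath⟩ := fun h => hg1 <| by
    have hc : c.trans (.refl x) = c.trans g.toPath :=
      c.trans_refl.trans (eq_of_heq (Sigma.mk.inj h).2)
    exact (c.trans_right_injective hc).symm
  obtain ⟨s, t, hs, ht, hcs, hgt, hst⟩ := t2_separation (X := PathSpace X x₀) hne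
  obtain ⟨U, hU, hxU, hUs⟩ := exists_whiskerBall_subset hs hcs
  obtain ⟨V, hV, hxV, hVt⟩ := exists_whiskerBall_subset ht hgt
  have hmem :=
    (mk_trans_mem_whiskerBall_iff (U := U ∩ V) c g ⟨hxU, hxV⟩).2 (hg _ (hU.inter hV) _)
  exact hst.ne_of_mem (hUs (whiskerBall_mono inter_subset_left hmem))
    (hVt (mem_whiskerBall_self hxV)) rfl

theorem homotopicallyHausdorff_of_t2Space [PathConnectedSpace X] (x₀ : X)
    [T2Space (PathSpace X x₀)] : HomotopicallyHausdorff X := by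
  intro x
  refine (Subgroup.eq_bot_iff_forall _).2 fun g hg => ?_
  simp only [Subgroup.mem_iInf] at hg
  exact eq_one_of_forall_mem_imageSubgroup (.mk (PathConnectedSpace.somePath x₀ x)) hg

theorem exists_disjoint_whiskerBall {y : X} {c c' : Path.Homotopic.Quotient x₀ y}
    (hbot : (⨅ (U : Set X) (_ : IsOpen U) (hy : y ∈ U), imageSubgroup U y hy) = ⊥)
    (hcc' : c ≠ c') :
    ∃ U, IsOpen U ∧ y ∈ U ∧
      Disjoint (whiskerBall (⟨y, c⟩ : PathSpace X x₀) U) (whiskerBall ⟨y, c'⟩ U) := by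
  let g : FundamentalGroup X y := c.symm.trans c'
  have hcg : c.trans g.toPath = c' := by simp [g, ← Path.Homotopic.Quotient.trans_assoc]
  have hg1 : g ≠ 1 := fun h => hcc' <| by
    rw [← hcg, h]
    exact c.trans_refl.symm
  obtain ⟨U, hU, hyU, hgU⟩ : ∃ U, IsOpen U ∧ ∃ hy : y ∈ U, g ∉ imageSubgroup U y hy := by
    by_contra! h
    exact hg1 ((Subgroup.eq_bot_iff_forall _).1 hbot g (by simpa only [Subgroup.mem_iInf] using h))
  refine ⟨U, hU, hyU, disjoint_whiskerBall_iff.2 ?_⟩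
  exact hcg ▸ (mk_trans_mem_whiskerBall_iff c g hyU).not.2 hgU

theorem t2Space_of_homotopicallyHausdorff [T2Space X] (h : HomotopicallyHausdorff X) :
    T2Space (PathSpace X x₀) := by
  refine ⟨fun ⟨y, c⟩ ⟨y', c'⟩ hne => ?_⟩
  by_cases hyy' : y = y'
  · subst hyy'
    obtain ⟨U, hU, hyU, hdisj⟩ :=
      exists_disjoint_whiskerBall (h y) fun hcc' => hne (congrArg _ hcc')
    exact ⟨_, _, isOpen_whiskerBall hU hyU, isOpen_whiskerBall hU hyU,
      mem_whiskerBall_self hyU, mem_whiskerBall_self hyU, hdisj⟩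
  · exact separated_by_continuous continuous_fst_pathSpace hyy'

/-- For a path connected Hausdorff space `X`, the space `X̃` with the whisker topology is
Hausdorff iff `X` is homotopically Hausdorff. -/
theorem pathSpace_t2_iff_homotopicallyHausdorff [T2Space X] [PathConnectedSpace X] (x₀ : X) :
    @T2Space (PathSpace X x₀) (whiskerTopology x₀) ↔
      ∀ x : X, (⨅ (U : Set X) (_ : IsOpen U) (hx : x ∈ U), imageSubgroup U x hx) = ⊥ :=
  ⟨fun _ => homotopicallyHausdorff_of_t2Space x₀, t2Space_of_homotopicallyHausdorff⟩
end
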